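/- arXiv:1904.02985 — 5 statements merged into one kernel-verified Lean document; each statement's English description precedes it below -/
import Mathlib

section
/- For every natural number k and every real t (with sin(t/2) ≠ 0), the conjugate Dirichlet kernel satisfies |(cos(t/2) − cos((2k+1)t/2)) / (2 sin(t/2))| ≤ k(k+1)|t|/2. -/
open Real Finset

lemma conj_dirichlet_sum (k : ℕ) (t : ℝ) :
    Real.cos (t / 2) - Real.cos ((2 * k + 1) * t / 2) =
      2 * Real.sin (t / 2) * ∑ j ∈ Finset.range k, Real.sin ((j + 1) * t) := by
  induction k with
  | zero => simp
  | succ n ih =>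
    rw [Finset.sum_range_succ, mul_add, ← ih]
    have : Real.cos ((2 * n + 1) * t / 2) - Real.cos ((2 * (n + 1) + 1) * t / 2) =
        2 * Real.sin (t / 2) * Real.sin ((n + 1) * t) := by
      rw [Real.cos_sub_cos]
      ring_nf
      rw [show t * (-1/2) = -(t*(1/2)) by ring, Real.sin_neg]
      ring
    push_cast at this ⊢
    linarith
theorem conj_dirichlet_bound_two (k : ℕ) (t : ℝ) (h : Real.sin (t / 2) ≠ 0) :
    |(Real.cos (t / 2) - Real.cos ((2 * k + 1) * t / 2)) / (2 * Real.sin (t / 2))| ≤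
      k * (k + 1) * |t| / 2 := by
  rw [conj_dirichlet_sum k t, mul_comm, mul_div_assoc,
    div_self (by simpa using h), mul_one]
  calc |∑ j ∈ Finset.range k, Real.sin ((j + 1) * t)|
      ≤ ∑ j ∈ Finset.range k, |Real.sin ((j + 1) * t)| := Finset.abs_sum_le_sum_abs _ _
    _ ≤ ∑ j ∈ Finset.range k, ((j : ℝ) + 1) * |t| := by
        refine Finset.sum_le_sum fun j _ => ?_
        calc |Real.sin ((j + 1) * t)| ≤ |((j : ℝ) + 1) * t| := Real.abs_sin_le_abs
          _ = ((j : ℝ) + 1) * |t| := by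
              rw [abs_mul, abs_of_nonneg (by positivity)]
    _ = (∑ j ∈ Finset.range k, ((j : ℝ) + 1)) * |t| := by rw [Finset.sum_mul]
    _ = k * (k + 1) * |t| / 2 := by
        have : ∑ j ∈ Finset.range k, ((j : ℝ) + 1) = k * (k + 1) / 2 := by
          induction k with
          | zero => simp
          | succ n ih => rw [Finset.sum_range_succ, ih]; push_cast; ring
        rw [this]; ring
end

section
/- Let r be a positive integer, l an integer, and (a_k) a sequence of complex numbers. If x ≠ 2lπ/r for all integers l (i.e., sin(rx/2) ≠ 0), then for all n ≤ m: ∑_{k=n}^{m} a_k sin(kx) = −∑_{k=n}^{m} (a_k − a_{k+r}) · cos((2k+r)x/2)/(2 sin(rx/2)) + ∑_{k=m+1}^{m+r} a_k · cos((2k−r)x/2)/(2 sin(−rx/2)) − ∑_{k=n}^{n+r−1} a_k · cos((2k−r)x/2)/(2 sin(−rx/2)). -/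
open Finset Real

theorem abel_sine_r_differences (r : ℕ) (hr : 0 < r) (a : ℕ → ℂ) (x : ℝ)
    (hx : Real.sin (r * x / 2) ≠ 0) (n m : ℕ) (hnm : n ≤ m) :
    ∑ k ∈ Finset.Icc n m, a k * (Real.sin (k * x) : ℂ) =
      - ∑ k ∈ Finset.Icc n m, (a k - a (k + r)) *
          ((Real.cos ((2 * k + r) * x / 2) / (2 * Real.sin (r * x / 2)) : ℝ) : ℂ)
      + ∑ k ∈ Finset.Icc (m + 1) (m + r), a k *
          ((Real.cos ((2 * k - r) * x / 2) / (2 * Real.sin (-(r * x) / 2)) : ℝ) : ℂ)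
      - ∑ k ∈ Finset.Icc n (n + r - 1), a k *
          ((Real.cos ((2 * k - r) * x / 2) / (2 * Real.sin (-(r * x) / 2)) : ℝ) : ℂ) := by
  set d : ℕ → ℝ := fun k => Real.cos ((2 * k - r) * x / 2) / (2 * Real.sin (-(r * x) / 2))
    with hd
  have hneg : Real.sin (-(r * x) / 2) = - Real.sin (r * x / 2) := by
    rw [neg_div, Real.sin_neg]
  -- key trig identity
  have hsin : ∀ k : ℕ, Real.sin (k * x) = d (k + r) - d k := by
    intro k
    have hcc := Real.cos_sub_cos ((2 * (k:ℝ) - r) * x / 2) ((2 * (k:ℝ) + r) * x / 2)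
    have h1 : ((2 * (k:ℝ) - r) * x / 2 + (2 * (k:ℝ) + r) * x / 2) / 2 = k * x := by ring
    have h2 : ((2 * (k:ℝ) - r) * x / 2 - (2 * (k:ℝ) + r) * x / 2) / 2 = -(r * x / 2) := by
      ring
    rw [h1, h2, Real.sin_neg] at hcc
    have h3 : (2 * ((k:ℝ) + r) - r) = 2 * (k:ℝ) + r := by ring
    simp only [hd]
    push_cast
    rw [h3, hneg]
    rw [div_sub_div_same, eq_div_iff (mul_ne_zero two_ne_zero (neg_ne_zero.mpr hx))]
    linear_combination hcc
  -- the cos((2k+r)x/2)/(2 sin(rx/2)) term equals -d (k+r)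
  have hcosd : ∀ k : ℕ,
      Real.cos ((2 * k + r) * x / 2) / (2 * Real.sin (r * x / 2)) = - d (k + r) := by
    intro k
    simp only [hd]
    push_cast
    have h3 : (2 * ((k:ℝ) + r) - r) = 2 * (k:ℝ) + r := by ring
    rw [h3, hneg]
    field_simp
  -- rewrite all summands in terms of d
  have key : ∀ (g : ℕ → ℂ),
      (∑ k ∈ Finset.Icc n m, g k + ∑ k ∈ Finset.Icc (m + 1) (m + r), g k)
        = ∑ k ∈ Finset.Icc n (n + r - 1), g k + ∑ k ∈ Finset.Icc (n + r) (m + r), g k := by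
    intro g
    have e1 : ∀ a b : ℕ, Finset.Icc a b = Finset.Ico a (b + 1) := by
      intro a b; rw [Finset.Ico_add_one_right_eq_Icc]
    rw [e1 n m, e1 (m+1) (m+r), e1 n (n + r - 1), e1 (n+r) (m+r)]
    have hr1 : n + r - 1 + 1 = n + r := by omega
    rw [hr1]
    rw [Finset.sum_Ico_consecutive _ (by omega : n ≤ m + 1) (by omega : m + 1 ≤ m + r + 1),
        Finset.sum_Ico_consecutive _ (by omega : n ≤ n + r) (by omega : n + r ≤ m + r + 1)]
  have shift : ∑ k ∈ Finset.Icc n m, a (k + r) * (d (k + r) : ℂ)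
      = ∑ k ∈ Finset.Icc (n + r) (m + r), a k * (d k : ℂ) := by
    rw [← Finset.map_add_right_Icc n m r, Finset.sum_map]
    simp [addRightEmbedding]
  calc ∑ k ∈ Finset.Icc n m, a k * (Real.sin (k * x) : ℂ)
      = ∑ k ∈ Finset.Icc n m, (a k * (d (k + r) : ℂ) - a k * (d k : ℂ)) := by
        apply Finset.sum_congr rfl
        intro k _
        rw [hsin k]
        push_cast
        ring
    _ = ∑ k ∈ Finset.Icc n m, a k * (d (k + r) : ℂ) - ∑ k ∈ Finset.Icc n m, a k * (d k : ℂ) := by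
        rw [Finset.sum_sub_distrib]
    _ = _ := by
        have hrw1 : ∑ k ∈ Finset.Icc n m, (a k - a (k + r)) *
            ((Real.cos ((2 * k + r) * x / 2) / (2 * Real.sin (r * x / 2)) : ℝ) : ℂ)
          = ∑ k ∈ Finset.Icc n m, (a (k + r) * (d (k + r) : ℂ) - a k * (d (k + r) : ℂ)) := by
          apply Finset.sum_congr rfl
          intro k _
          rw [hcosd k]
          push_cast
          ring
        rw [hrw1, Finset.sum_sub_distrib, shift]
        have := key (fun k => a k * (d k : ℂ))
        have := sub_eq_sub_iff_add_eq_add.mpr this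
        linear_combination -this
end

section
/- Let r be a positive integer and (a_k) a sequence of complex numbers. If sin(rx/2) ≠ 0, then for all n ≤ m: ∑_{k=n}^{m} a_k cos(kx) = ∑_{k=n}^{m} (a_k − a_{k+r}) · sin((2k+r)x/2)/(2 sin(rx/2)) − ∑_{k=m+1}^{m+r} a_k · sin((2k−r)x/2)/(2 sin(−rx/2)) + ∑_{k=n}^{n+r−1} a_k · sin((2k−r)x/2)/(2 sin(−rx/2)). -/
theorem abel_cosine_r_differences (r : ℕ) (hr : 0 < r) (a : ℕ → ℂ) (x : ℝ)
    (hx : Real.sin (r * x / 2) ≠ 0) (n m : ℕ) (hnm : n ≤ m) :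
    ∑ k ∈ Finset.Icc n m, a k * (Real.cos (k * x) : ℂ) =
      ∑ k ∈ Finset.Icc n m, (a k - a (k + r)) *
          ((Real.sin ((2 * k + r) * x / 2) / (2 * Real.sin (r * x / 2)) : ℝ) : ℂ)
      - ∑ k ∈ Finset.Icc (m + 1) (m + r), a k *
          ((Real.sin ((2 * k - r) * x / 2) / (2 * Real.sin (-(r * x) / 2)) : ℝ) : ℂ)
      + ∑ k ∈ Finset.Icc n (n + r - 1), a k *
          ((Real.sin ((2 * k - r) * x / 2) / (2 * Real.sin (-(r * x) / 2)) : ℝ) : ℂ) := by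
  have hs : Real.sin (-(↑r * x) / 2) = -Real.sin (↑r * x / 2) := by
    rw [neg_div, Real.sin_neg]
  -- pointwise decomposition
  have key : ∀ k : ℕ, Real.cos (k * x) =
      Real.sin ((2 * k + r) * x / 2) / (2 * Real.sin (r * x / 2)) +
      Real.sin ((2 * k - r) * x / 2) / (2 * Real.sin (-(r * x) / 2)) := by
    intro k
    rw [hs]
    have h := Real.sin_sub_sin ((2 * k + r) * x / 2) ((2 * k - r) * x / 2)
    have e1 : ((2 * k + r) * x / 2 - (2 * k - r) * x / 2) / 2 = r * x / 2 := by ring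
    have e2 : ((2 * k + r) * x / 2 + (2 * k - r) * x / 2) / 2 = k * x := by ring
    rw [e1, e2] at h
    have h2 : Real.sin ((2 * k + r) * x / 2) / (2 * Real.sin (r * x / 2)) +
        Real.sin ((2 * k - r) * x / 2) / (2 * -Real.sin (r * x / 2)) =
        (Real.sin ((2 * k + r) * x / 2) - Real.sin ((2 * k - r) * x / 2)) /
          (2 * Real.sin (r * x / 2)) := by ring
    rw [h2, h, mul_div_cancel_left₀ _ (mul_ne_zero two_ne_zero hx)]
  -- shift identity: Dp k = - Dm (k+r)
  have shift : ∀ k : ℕ,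
      ((Real.sin ((2 * k + r) * x / 2) / (2 * Real.sin (r * x / 2)) : ℝ) : ℂ) =
      - ((Real.sin ((2 * (k + r) - r) * x / 2) / (2 * Real.sin (-(r * x) / 2)) : ℝ) : ℂ) := by
    intro k
    have : (Real.sin ((2 * (k + r) - r) * x / 2) / (2 * Real.sin (-(r * x) / 2)) : ℝ)
        = - (Real.sin ((2 * k + r) * x / 2) / (2 * Real.sin (r * x / 2))) := by
      rw [hs]
      have e : ((2 * ((k : ℝ) + r) - r) * x / 2) = ((2 * k + r) * x / 2) := by ring
      rw [e]
      ring
    rw [this]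
    push_cast
    ring
  set g : ℕ → ℂ := fun k => a k *
      ((Real.sin ((2 * k - r) * x / 2) / (2 * Real.sin (-(r * x) / 2)) : ℝ) : ℂ) with hg
  -- index shift of sum
  have hshiftsum : ∑ k ∈ Finset.Icc (n + r) (m + r), g k
      = ∑ k ∈ Finset.Icc n m, g (k + r) := by
    rw [← Finset.map_add_right_Icc, Finset.sum_map]
    rfl
  -- consecutive sums
  have hIcc : ∀ p q : ℕ, Finset.Icc p q = Finset.Ico p (q + 1) := by
    intro p q; rw [Finset.Ico_add_one_right_eq_Icc]
  have hcons : ∑ k ∈ Finset.Icc n m, g k + ∑ k ∈ Finset.Icc (m + 1) (m + r), g k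
      = ∑ k ∈ Finset.Icc n (n + r - 1), g k + ∑ k ∈ Finset.Icc (n + r) (m + r), g k := by
    have h1 : n + r - 1 + 1 = n + r := by omega
    rw [hIcc n m, hIcc (m+1) (m+r), hIcc n (n+r-1), hIcc (n+r) (m+r), h1]
    rw [Finset.sum_Ico_consecutive _ (by omega) (by omega),
        Finset.sum_Ico_consecutive _ (by omega) (by omega)]
  -- main computation
  have main : ∑ k ∈ Finset.Icc n m, a k * (Real.cos (k * x) : ℂ) =
      ∑ k ∈ Finset.Icc n m, (a k - a (k + r)) *
          ((Real.sin ((2 * k + r) * x / 2) / (2 * Real.sin (r * x / 2)) : ℝ) : ℂ)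
      - ∑ k ∈ Finset.Icc (n + r) (m + r), g k + ∑ k ∈ Finset.Icc n m, g k := by
    rw [hshiftsum, ← Finset.sum_sub_distrib, ← Finset.sum_add_distrib]
    apply Finset.sum_congr rfl
    intro k _
    have hk := key k
    have hk' : (Real.cos (↑k * x) : ℂ) =
        ((Real.sin ((2 * k + r) * x / 2) / (2 * Real.sin (r * x / 2)) : ℝ) : ℂ) +
        ((Real.sin ((2 * k - r) * x / 2) / (2 * Real.sin (-(r * x) / 2)) : ℝ) : ℂ) := by
      rw [← Complex.ofReal_add, hk]
    rw [hk', shift k]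
    simp only [hg]
    push_cast
    ring
  rw [main]
  linear_combination hcons
end

section
/- Let r be a positive integer and (a_{n,k}) an infinite matrix of nonnegative reals with ∑_{k=0}^∞ a_{n,k} = 1 for each n. For each n, and each t with sin(t/2) ≠ 0 and sin(rt/2) ≠ 0, |∑_{k=0}^∞ a_{n,k} cos((2k+1)t/2)/(2 sin(t/2))| ≤ (1/(2|sin(t/2) sin(rt/2)|)) · (∑_{k=0}^∞ |a_{n,k} − a_{n,k+r}| + ∑_{k=0}^{r−1} a_{n,k}), assuming ∑_k |a_{n,k} − a_{n,k+r}| < ∞. -/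
open Finset Filter Topology

lemma cos_sum_eq (θ d : ℝ) (m : ℕ) :
    2 * Real.sin (d/2) * ∑ j ∈ Finset.range m, Real.cos (θ + j * d) =
      Real.sin (θ + m * d - d/2) - Real.sin (θ - d/2) := by
  induction m with
  | zero => simp
  | succ m ih =>
    rw [Finset.sum_range_succ, mul_add, ih]
    have e1 : θ + ((m : ℝ)+1) * d - d/2 = (θ + m*d) + d/2 := by ring
    have e2 : θ + (m:ℝ)*d - d/2 = (θ + m*d) - d/2 := by ring
    push_cast
    rw [e1, e2, Real.sin_add, Real.sin_sub]
    ring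

lemma cos_sum_bound (θ d : ℝ) (hd : Real.sin (d/2) ≠ 0) (m : ℕ) :
    |∑ j ∈ Finset.range m, Real.cos (θ + j * d)| ≤ 1 / |Real.sin (d/2)| := by
  have h0 : 0 < |Real.sin (d/2)| := abs_pos.mpr hd
  rw [le_div_iff₀ h0]
  have h1 := cos_sum_eq θ d m
  have h2 : |Real.sin (θ + m * d - d/2) - Real.sin (θ - d/2)| ≤ 2 := by
    calc |Real.sin (θ + m * d - d/2) - Real.sin (θ - d/2)|
        ≤ |Real.sin (θ + m * d - d/2)| + |Real.sin (θ - d/2)| := abs_sub _ _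
      _ ≤ 1 + 1 := add_le_add (Real.abs_sin_le_one _) (Real.abs_sin_le_one _)
      _ = 2 := by norm_num
  have h3 : |2 * Real.sin (d/2) * ∑ j ∈ Finset.range m, Real.cos (θ + j * d)| ≤ 2 := by
    rw [h1]; exact h2
  rw [abs_mul, abs_mul, abs_two] at h3
  nlinarith [abs_nonneg (∑ j ∈ Finset.range m, Real.cos (θ + j * d)), abs_nonneg (Real.sin (d/2))]

lemma abel_bound (r : ℕ) (hr : 0 < r) (b : ℕ → ℝ) (hpos : ∀ k, 0 ≤ b k)
    (hb : Summable b) (t : ℝ) (h2 : Real.sin (↑r * t / 2) ≠ 0)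
    (hA : Summable fun k => |b k - b (k + r)|) :
    |∑' k : ℕ, b k * Real.cos ((2 * k + 1) * t / 2)| ≤
      (1 / |Real.sin (↑r * t / 2)|) * ∑' k : ℕ, |b k - b (k + r)| := by
  set M := 1 / |Real.sin (↑r * t / 2)| with hMdef
  have hM0 : 0 ≤ M := by positivity
  set c : ℕ → ℝ := fun k => Real.cos ((2 * k + 1) * t / 2) with hc
  set G : ℕ → ℝ := fun k => ∑ j ∈ Finset.range (k / r + 1), c (k % r + j * r) with hG
  -- bound on G
  have hGb : ∀ k, |G k| ≤ M := by
    intro k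
    have harg : ∀ j : ℕ, c (k % r + j * r) =
        Real.cos ((2 * (k % r : ℕ) + 1) * t / 2 + j * (r * t)) := by
      intro j
      simp only [hc]
      congr 1
      push_cast
      ring
    have : G k = ∑ j ∈ Finset.range (k / r + 1),
        Real.cos ((2 * (k % r : ℕ) + 1) * t / 2 + j * (r * t)) := by
      simp only [hG]
      exact Finset.sum_congr rfl (fun j _ => harg j)
    rw [this]
    have hd : Real.sin ((↑r * t) / 2) ≠ 0 := by
      exact h2
    have := cos_sum_bound ((2 * (k % r : ℕ) + 1) * t / 2) (r * t) hd (k / r + 1)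
    calc _ ≤ 1 / |Real.sin ((↑r * t)/2)| := this
      _ = M := by rw [hMdef]
  -- G at small values
  have hGlt : ∀ k, k < r → G k = c k := by
    intro k hk
    simp only [hG, Nat.div_eq_of_lt hk, Nat.mod_eq_of_lt hk]
    simp
  -- recursion
  have hGrec : ∀ m : ℕ, G (r + m) = c (r + m) + G m := by
    intro m
    simp only [hG]
    rw [Nat.add_div_left m hr, Nat.add_mod_left]
    rw [Finset.sum_range_succ]
    have : m % r + (m / r + 1) * r = r + m := by
      rw [add_mul, one_mul]
      have h := Nat.mod_add_div' m r
      omega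
    rw [this]
    ring
  -- key identity
  have key : ∀ N : ℕ, ∑ k ∈ Finset.range N, b k * c k =
      ∑ k ∈ Finset.range (N - r), (b k - b (k + r)) * G k +
      ∑ k ∈ Finset.Ico (N - r) N, b k * G k := by
    intro N
    have hsplit : ∑ k ∈ Finset.range N, b k * G k =
        ∑ k ∈ Finset.range (N - r), b k * G k + ∑ k ∈ Finset.Ico (N - r) N, b k * G k := by
      rw [Finset.range_eq_Ico, ← Finset.sum_Ico_consecutive _ (Nat.zero_le _) (Nat.sub_le N r),
        ← Finset.range_eq_Ico]
    have hshift : ∑ k ∈ Finset.range (N - r), b (k + r) * G k =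
        ∑ k ∈ Finset.Ico r N, b k * G (k - r) := by
      rw [Finset.sum_Ico_eq_sum_range]
      refine Finset.sum_congr rfl (fun i _ => ?_)
      rw [Nat.add_sub_cancel_left, add_comm r i]
    have step3 : ∑ k ∈ Finset.range N, b k * G k - ∑ k ∈ Finset.Ico r N, b k * G (k - r)
        = ∑ k ∈ Finset.range N, b k * c k := by
      rcases le_or_gt N r with hN | hN
      · rw [Finset.Ico_eq_empty (by omega)]
        simp only [Finset.sum_empty, sub_zero]
        refine Finset.sum_congr rfl (fun k hk => ?_)
        rw [hGlt k (by simp at hk; omega)]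
      · have hsplit2 : ∑ k ∈ Finset.range N, b k * G k =
            ∑ k ∈ Finset.range r, b k * G k + ∑ k ∈ Finset.Ico r N, b k * G k := by
          rw [Finset.range_eq_Ico, ← Finset.sum_Ico_consecutive _ (Nat.zero_le _) hN.le,
            ← Finset.range_eq_Ico]
        rw [hsplit2]
        have e1 : ∑ k ∈ Finset.range r, b k * G k = ∑ k ∈ Finset.range r, b k * c k := by
          refine Finset.sum_congr rfl (fun k hk => ?_)
          rw [hGlt k (Finset.mem_range.mp hk)]
        have e2 : ∑ k ∈ Finset.Ico r N, b k * G k - ∑ k ∈ Finset.Ico r N, b k * G (k - r)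
            = ∑ k ∈ Finset.Ico r N, b k * c k := by
          rw [← Finset.sum_sub_distrib]
          refine Finset.sum_congr rfl (fun k hk => ?_)
          have hrk : r ≤ k := (Finset.mem_Ico.mp hk).1
          obtain ⟨m, rfl⟩ := Nat.exists_eq_add_of_le hrk
          rw [Nat.add_sub_cancel_left, hGrec m]
          ring
        rw [e1]
        rw [Finset.range_eq_Ico N, ← Finset.sum_Ico_consecutive _ (Nat.zero_le r) hN.le,
          ← Finset.range_eq_Ico]
        rw [← e2]
        ring
    rw [eq_comm]
    calc ∑ k ∈ Finset.range (N - r), (b k - b (k + r)) * G k +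
          ∑ k ∈ Finset.Ico (N - r) N, b k * G k
        = (∑ k ∈ Finset.range (N - r), b k * G k + ∑ k ∈ Finset.Ico (N - r) N, b k * G k)
          - ∑ k ∈ Finset.range (N - r), b (k + r) * G k := by
          simp only [sub_mul, Finset.sum_sub_distrib]; ring
      _ = ∑ k ∈ Finset.range N, b k * G k - ∑ k ∈ Finset.Ico r N, b k * G (k - r) := by
          rw [← hsplit, hshift]
      _ = ∑ k ∈ Finset.range N, b k * c k := step3
  -- summability of the series
  have hsummand : ∀ k, |b k * c k| ≤ b k := by
    intro k
    rw [abs_mul]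
    calc |b k| * |c k| ≤ |b k| * 1 :=
        mul_le_mul_of_nonneg_left (Real.abs_cos_le_one _) (abs_nonneg _)
      _ = b k := by rw [mul_one, abs_of_nonneg (hpos k)]
  have hf : Summable (fun k => b k * c k) := by
    apply Summable.of_abs
    exact Summable.of_nonneg_of_le (fun k => abs_nonneg _) hsummand hb
  set T := ∑' k : ℕ, |b k - b (k + r)| with hT
  have hbound : ∀ N, |∑ k ∈ Finset.range N, b k * c k| ≤
      M * T + M * ∑ k ∈ Finset.Ico (N - r) N, b k := by
    intro N
    rw [key N]
    calc |∑ k ∈ Finset.range (N-r), (b k - b (k+r)) * G k +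
          ∑ k ∈ Finset.Ico (N-r) N, b k * G k|
        ≤ |∑ k ∈ Finset.range (N-r), (b k - b (k+r)) * G k| +
          |∑ k ∈ Finset.Ico (N-r) N, b k * G k| := abs_add_le _ _
      _ ≤ (∑ k ∈ Finset.range (N-r), |b k - b (k+r)| * M) +
          ∑ k ∈ Finset.Ico (N-r) N, b k * M := by
          refine add_le_add ?_ ?_
          · refine (Finset.abs_sum_le_sum_abs _ _).trans ?_
            refine Finset.sum_le_sum (fun k _ => ?_)
            rw [abs_mul]
            exact mul_le_mul_of_nonneg_left (hGb k) (abs_nonneg _)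
          · refine (Finset.abs_sum_le_sum_abs _ _).trans ?_
            refine Finset.sum_le_sum (fun k _ => ?_)
            rw [abs_mul, abs_of_nonneg (hpos k)]
            exact mul_le_mul_of_nonneg_left (hGb k) (hpos k)
      _ = M * (∑ k ∈ Finset.range (N-r), |b k - b (k+r)|) +
          M * ∑ k ∈ Finset.Ico (N-r) N, b k := by
          rw [← Finset.sum_mul, ← Finset.sum_mul]; ring
      _ ≤ M * T + M * ∑ k ∈ Finset.Ico (N-r) N, b k := by
          refine add_le_add ?_ le_rfl
          exact mul_le_mul_of_nonneg_left
            (Summable.sum_le_tsum _ (fun k _ => abs_nonneg _) hA) hM0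
  have h1 : Filter.Tendsto (fun N => ∑ k ∈ Finset.range N, b k) atTop (nhds (∑' k, b k)) :=
    hb.hasSum.tendsto_sum_nat
  have h2 : Filter.Tendsto (fun N : ℕ => N - r) atTop atTop := tendsto_sub_atTop_nat r
  have htail : Filter.Tendsto (fun N => ∑ k ∈ Finset.Ico (N - r) N, b k) atTop (nhds 0) := by
    have heq : (fun N => ∑ k ∈ Finset.Ico (N - r) N, b k) =
        fun N => (∑ k ∈ Finset.range N, b k) - ∑ k ∈ Finset.range (N - r), b k := by
      funext N
      rw [Finset.sum_Ico_eq_sub _ (Nat.sub_le N r)]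
    rw [heq]
    have := h1.sub (h1.comp h2)
    rwa [sub_self] at this
  have hlim2 : Filter.Tendsto (fun N => M * T + M * ∑ k ∈ Finset.Ico (N-r) N, b k)
      atTop (nhds (M * T + M * 0)) :=
    tendsto_const_nhds.add (tendsto_const_nhds.mul htail)
  have hlim1 : Filter.Tendsto (fun N => |∑ k ∈ Finset.range N, b k * c k|) atTop
      (nhds |∑' k, b k * c k|) := hf.hasSum.tendsto_sum_nat.abs
  have hfinal := le_of_tendsto_of_tendsto' hlim1 hlim2 hbound
  rw [mul_zero, add_zero] at hfinal
  exact hfinal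

theorem kernel_sum_bound (r : ℕ) (hr : 0 < r) (a : ℕ → ℕ → ℝ)
    (hpos : ∀ n k, 0 ≤ a n k) (hsum : ∀ n, HasSum (a n) 1)
    (n : ℕ) (t : ℝ) (h1 : Real.sin (t / 2) ≠ 0) (h2 : Real.sin (r * t / 2) ≠ 0)
    (hA : Summable fun k => |a n k - a n (k + r)|) :
    |∑' k : ℕ, a n k * (Real.cos ((2 * k + 1) * t / 2) / (2 * Real.sin (t / 2)))| ≤
      (1 / (2 * |Real.sin (t / 2) * Real.sin (r * t / 2)|)) *
        ((∑' k : ℕ, |a n k - a n (k + r)|) + ∑ k ∈ Finset.range r, a n k) := by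
  have hb : Summable (a n) := ⟨1, hsum n⟩
  have key := abel_bound r hr (a n) (hpos n) hb t h2 hA
  have ht : ∑' k : ℕ, a n k * (Real.cos ((2 * k + 1) * t / 2) / (2 * Real.sin (t / 2)))
      = (∑' k : ℕ, a n k * Real.cos ((2 * k + 1) * t / 2)) * (1 / (2 * Real.sin (t/2))) := by
    rw [← tsum_mul_right]
    exact tsum_congr (fun k => by ring)
  rw [ht, abs_mul]
  set S := |∑' k : ℕ, a n k * Real.cos ((2 * k + 1) * t / 2)| with hS
  set T := ∑' k : ℕ, |a n k - a n (k + r)| with hT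
  set Q := ∑ k ∈ Finset.range r, a n k with hQ
  have hQ0 : 0 ≤ Q := Finset.sum_nonneg (fun k _ => hpos n k)
  have hs1 : 0 < |Real.sin (t/2)| := abs_pos.mpr h1
  have hs2 : 0 < |Real.sin (↑r * t/2)| := abs_pos.mpr h2
  have habs : |1/(2*Real.sin (t/2))| = 1/(2*|Real.sin (t/2)|) := by
    rw [abs_div, abs_one, abs_mul, abs_two]
  rw [habs, abs_mul]
  have hS0 : 0 ≤ S := abs_nonneg _
  calc S * (1/(2*|Real.sin (t/2)|))
      ≤ ((1 / |Real.sin (↑r * t/2)|) * T) * (1/(2*|Real.sin (t/2)|)) :=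
        mul_le_mul_of_nonneg_right key (by positivity)
    _ = 1 / (2 * (|Real.sin (t/2)| * |Real.sin (↑r * t/2)|)) * T := by
        field_simp
    _ ≤ 1 / (2 * (|Real.sin (t/2)| * |Real.sin (↑r * t/2)|)) * (T + Q) := by
        refine mul_le_mul_of_nonneg_left (le_add_of_nonneg_right hQ0) (by positivity)
end

section
/- Let r be a positive integer, c > 1, K > 0, and (a_{n,k}) nonnegative with ∑_k a_{n,k} = 1. Assume ∑_{k=m}^∞ |a_{n,k} − a_{n,k+r}| ≤ K ∑_{k=⌈m/c⌉}^∞ a_{n,k}/k for all m ≥ 1. Let (w_μ) be a nonincreasing nonnegative sequence. Then ∑_{μ=1}^n w_μ ∑_{k=μ}^∞ |a_{n,k} − a_{n,k+r}| ≤ K [ c ∑_{μ=1}^n (w_μ/μ) ∑_{k=0}^{μ+1} a_{n,k} + ∑_{μ=1}^n w_μ (∑_{k=μ}^n a_{n,k}/k + ∑_{k=n+1}^∞ a_{n,k}/k) ]. -/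
theorem splitting_estimate (r : ℕ) (hr : 0 < r) (c K : ℝ) (hc : 1 < c) (hK : 0 < K)
    (a : ℕ → ℕ → ℝ) (hpos : ∀ n k, 0 ≤ a n k) (hsum : ∀ n, HasSum (a n) 1)
    (n : ℕ)
    (h200 : ∀ m : ℕ, 1 ≤ m →
      ∑' j : ℕ, |a n (m + j) - a n (m + j + r)| ≤
        K * ∑' j : ℕ, a n (⌈(m : ℝ) / c⌉₊ + j) / ((⌈(m : ℝ) / c⌉₊ + j : ℕ) : ℝ))
    (w : ℕ → ℝ) (hw0 : ∀ μ, 0 ≤ w μ) (hwmono : ∀ μ ν : ℕ, μ ≤ ν → w ν ≤ w μ) :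
    ∑ μ ∈ Finset.Icc 1 n, w μ * ∑' j : ℕ, |a n (μ + j) - a n (μ + j + r)| ≤
      K * (c * ∑ μ ∈ Finset.Icc 1 n, (w μ / μ) * ∑ k ∈ Finset.range (μ + 2), a n k
        + ∑ μ ∈ Finset.Icc 1 n, w μ *
            (∑ k ∈ Finset.Icc μ n, a n k / k
              + ∑' j : ℕ, a n (n + 1 + j) / ((n + 1 + j : ℕ) : ℝ))) := by
  have hfs : Summable (a n) := (hsum n).summable
  set g : ℕ → ℝ := fun k => a n k / k with hg
  have hg0 : ∀ k, 0 ≤ g k := fun k => div_nonneg (hpos n k) (Nat.cast_nonneg k)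
  have hgs : Summable g := by
    apply Summable.of_nonneg_of_le hg0 _ hfs
    intro k
    rcases Nat.eq_zero_or_pos k with h | h
    · simp [hg, h, hpos n 0]
    · have hk1 : (1:ℝ) ≤ (k:ℝ) := by exact_mod_cast h
      have : (0:ℝ) < k := by linarith
      rw [hg]
      rw [div_le_iff₀ this]
      nlinarith [hpos n k]
  have hsplit : ∀ m m' : ℕ, m ≤ m' →
      (∑' j, g (m + j)) = ∑ k ∈ Finset.Ico m m', g k + ∑' j, g (m' + j) := by
    intro m m' hmm
    have h1 : Summable (fun j => g (m + j)) := by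
      simpa [add_comm] using (summable_nat_add_iff m).mpr hgs
    have h2 := Summable.sum_add_tsum_nat_add (f := fun j => g (m + j)) (m' - m) h1
    rw [← h2]
    congr 1
    · rw [Finset.sum_Ico_eq_sum_range]
    · apply tsum_congr
      intro j
      have hj : m + (j + (m' - m)) = m' + j := by omega
      simp only [hj]
  have key : ∀ μ ∈ Finset.Icc 1 n,
      w μ * ∑' j : ℕ, |a n (μ + j) - a n (μ + j + r)| ≤
        K * (c * ((w μ / μ) * ∑ k ∈ Finset.range (μ + 2), a n k)
          + w μ * (∑ k ∈ Finset.Icc μ n, a n k / k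
            + ∑' j : ℕ, a n (n + 1 + j) / ((n + 1 + j : ℕ) : ℝ))) := by
    intro μ hμ
    rw [Finset.mem_Icc] at hμ
    obtain ⟨hμ1, hμn⟩ := hμ
    set m₀ : ℕ := ⌈(μ : ℝ) / c⌉₊ with hm₀
    have hcpos : (0:ℝ) < c := by linarith
    have hμpos : (0:ℝ) < μ := by exact_mod_cast hμ1
    have hm0pos : 1 ≤ m₀ := by
      rw [hm₀, Nat.one_le_iff_ne_zero, ← Nat.pos_iff_ne_zero, Nat.ceil_pos]
      positivity
    have hm0le : m₀ ≤ μ := by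
      rw [hm₀, Nat.ceil_le]
      rw [div_le_iff₀ hcpos]
      nlinarith
    have hT := h200 μ hμ1
    have hS1 : (∑' j : ℕ, a n (m₀ + j) / ((m₀ + j : ℕ) : ℝ)) =
        ∑ k ∈ Finset.Ico m₀ μ, g k + ∑ k ∈ Finset.Icc μ n, g k + ∑' j, g (n + 1 + j) := by
      have e1 := hsplit m₀ μ hm0le
      have e2 := hsplit μ (n + 1) (by omega)
      have : (∑' j : ℕ, a n (m₀ + j) / ((m₀ + j : ℕ) : ℝ)) = ∑' j, g (m₀ + j) := by
        apply tsum_congr; intro j; rfl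
      rw [this, e1, e2, Finset.Ico_add_one_right_eq_Icc]
      ring
    have hbound1 : ∑ k ∈ Finset.Ico m₀ μ, g k ≤
        (c / μ) * ∑ k ∈ Finset.range (μ + 2), a n k := by
      have step1 : ∑ k ∈ Finset.Ico m₀ μ, g k ≤
          ∑ k ∈ Finset.Ico m₀ μ, (c / μ) * a n k := by
        apply Finset.sum_le_sum
        intro k hk
        rw [Finset.mem_Ico] at hk
        have hk1 : 1 ≤ k := le_trans hm0pos hk.1
        have hkpos : (0:ℝ) < k := by exact_mod_cast hk1
        have hceil : (μ:ℝ) / c ≤ (m₀ : ℝ) := Nat.le_ceil _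
        have hkge : (μ:ℝ) / c ≤ (k:ℝ) := le_trans hceil (by exact_mod_cast hk.1)
        have hμck : (μ:ℝ) ≤ c * k := by
          rw [div_le_iff₀ hcpos] at hkge; linarith
        rw [hg, div_le_iff₀ hkpos, div_mul_eq_mul_div, div_mul_eq_mul_div,
          le_div_iff₀ hμpos]
        nlinarith [hpos n k]
      refine step1.trans ?_
      rw [← Finset.mul_sum]
      apply mul_le_mul_of_nonneg_left _ (by positivity)
      apply Finset.sum_le_sum_of_subset_of_nonneg
      · intro k hk
        rw [Finset.mem_Ico] at hk
        rw [Finset.mem_range]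
        omega
      · intro k _ _; exact hpos n k
    have htail : (∑' j : ℕ, a n (n + 1 + j) / ((n + 1 + j : ℕ) : ℝ)) =
        ∑' j, g (n + 1 + j) := by
      apply tsum_congr; intro j; rfl
    have hB : ∑ k ∈ Finset.Icc μ n, a n k / k = ∑ k ∈ Finset.Icc μ n, g k := rfl
    have hSle : (∑' j : ℕ, a n (m₀ + j) / ((m₀ + j : ℕ) : ℝ)) ≤
        (c / μ) * ∑ k ∈ Finset.range (μ + 2), a n k
          + (∑ k ∈ Finset.Icc μ n, a n k / k
            + ∑' j : ℕ, a n (n + 1 + j) / ((n + 1 + j : ℕ) : ℝ)) := by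
      rw [hS1, hB, htail]
      linarith [hbound1]
    have hTle : (∑' j : ℕ, |a n (μ + j) - a n (μ + j + r)|) ≤
        K * ((c / μ) * ∑ k ∈ Finset.range (μ + 2), a n k
          + (∑ k ∈ Finset.Icc μ n, a n k / k
            + ∑' j : ℕ, a n (n + 1 + j) / ((n + 1 + j : ℕ) : ℝ))) :=
      hT.trans (mul_le_mul_of_nonneg_left hSle hK.le)
    have hw := hw0 μ
    calc w μ * ∑' j : ℕ, |a n (μ + j) - a n (μ + j + r)|
        ≤ w μ * (K * ((c / μ) * ∑ k ∈ Finset.range (μ + 2), a n k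
          + (∑ k ∈ Finset.Icc μ n, a n k / k
            + ∑' j : ℕ, a n (n + 1 + j) / ((n + 1 + j : ℕ) : ℝ)))) :=
          mul_le_mul_of_nonneg_left hTle hw
      _ = K * (c * ((w μ / μ) * ∑ k ∈ Finset.range (μ + 2), a n k)
          + w μ * (∑ k ∈ Finset.Icc μ n, a n k / k
            + ∑' j : ℕ, a n (n + 1 + j) / ((n + 1 + j : ℕ) : ℝ))) := by ring
  calc ∑ μ ∈ Finset.Icc 1 n, w μ * ∑' j : ℕ, |a n (μ + j) - a n (μ + j + r)|
      ≤ ∑ μ ∈ Finset.Icc 1 n,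
          K * (c * ((w μ / μ) * ∑ k ∈ Finset.range (μ + 2), a n k)
            + w μ * (∑ k ∈ Finset.Icc μ n, a n k / k
              + ∑' j : ℕ, a n (n + 1 + j) / ((n + 1 + j : ℕ) : ℝ))) :=
        Finset.sum_le_sum key
    _ = K * (c * ∑ μ ∈ Finset.Icc 1 n, (w μ / μ) * ∑ k ∈ Finset.range (μ + 2), a n k
        + ∑ μ ∈ Finset.Icc 1 n, w μ *
            (∑ k ∈ Finset.Icc μ n, a n k / k
              + ∑' j : ℕ, a n (n + 1 + j) / ((n + 1 + j : ℕ) : ℝ))) := by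
        simp only [mul_add, Finset.mul_sum]
        rw [← Finset.sum_add_distrib]
end
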